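/- arXiv:1404.2873 — 5 statements merged into one kernel-verified Lean document; each statement's English description precedes it below -/
import Mathlib

section
/- Let p be a prime, s ≥ 2, and let (e₁, …, e_s) be a basis of the elementary abelian group G = C_p^s (each e_i of order p). Set e₀ = e₁ + … + e_s and G₀ = {e₀, e₁, …, e_s}. Then Δ(G₀) = {s − 1}. Consequently, for every finite abelian group G with r(G) ≥ 2, the interval [1, r(G) − 1] is contained in Δ*(G). -/
/-!
Write a sequence over `G₀` as `e₀^a ∏ eᵢ^(bᵢ)`; it is zero-sum iff `p ∣ a + bᵢ` for all `i`, and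
its atoms are the `eᵢ^p` and the `e₀^j ∏ eᵢ^(p-j)` with `1 ≤ j ≤ p`. Counting elements, a
factorization into `ℓ` atoms of which `u` contain `e₀` satisfies `p (ℓ + (s-1) u) = ∑ᵢ (a + bᵢ)`,
and peeling off atoms greedily realizes every `u` with `a ≤ p u ≤ a + bᵢ` and `u ≤ a`. So every
set of lengths is an arithmetic progression with difference `s - 1`, and it has two elements for
`e₀^p ∏ eᵢ^p`. A group of rank `r` contains a basis of `C_p^r` for some prime `p`; its first `d + 1`
elements give `d ∈ Δ*(G)` for every `1 ≤ d ≤ r - 1`.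
-/

open Multiset

section Defs

variable {G : Type*} [AddCommGroup G]

/-- `S` is a zero-sum sequence over `G₀`: a multiset with entries in `G₀` and sum `0`. -/
def IsZeroSumSeq (G₀ : Set G) (S : Multiset G) : Prop :=
  (∀ x ∈ S, x ∈ G₀) ∧ S.sum = 0

/-- `S` is an atom over `G₀`: a nonempty zero-sum sequence over `G₀` that is not the
union of two nonempty zero-sum sequences over `G₀`. -/
def IsAtomSeq (G₀ : Set G) (S : Multiset G) : Prop :=
  IsZeroSumSeq G₀ S ∧ S ≠ 0 ∧
    ∀ A B : Multiset G, IsZeroSumSeq G₀ A → IsZeroSumSeq G₀ B →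
      A ≠ 0 → B ≠ 0 → S ≠ A + B

/-- The set of lengths of `B`: all `k` such that `B` is a union of `k` atoms over `G₀`. -/
def LengthSet (G₀ : Set G) (B : Multiset G) : Set ℕ :=
  {k | ∃ l : Multiset (Multiset G), Multiset.card l = k ∧
      (∀ A ∈ l, IsAtomSeq G₀ A) ∧ l.sum = B}

/-- The set of successive distances of a set of naturals. -/
def DeltaOf (L : Set ℕ) : Set ℕ :=
  {d | ∃ x ∈ L, ∃ y ∈ L, x < y ∧ y - x = d ∧ ∀ z ∈ L, ¬(x < z ∧ z < y)}

/-- The set of distances `Δ(G₀)`. -/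
def DeltaSet (G₀ : Set G) : Set ℕ :=
  {d | ∃ B : Multiset G, IsZeroSumSeq G₀ B ∧ B ≠ 0 ∧ d ∈ DeltaOf (LengthSet G₀ B)}

/-- `G₀` is half-factorial if `Δ(G₀) = ∅`. -/
def IsHalfFactorialSet (G₀ : Set G) : Prop := DeltaSet G₀ = ∅

/-- `G₀` is minimal non-half-factorial if `Δ(G₀) ≠ ∅` and every proper subset is
half-factorial. -/
def IsMinNonHalfFactorial (G₀ : Set G) : Prop :=
  (DeltaSet G₀).Nonempty ∧ ∀ G₁ : Set G, G₁ ⊂ G₀ → DeltaSet G₁ = ∅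

/-- The cross number `k(S) = Σ 1/ord(g)` of a multiset over `G`. -/
noncomputable def crossNumber (S : Multiset G) : ℚ :=
  (S.map (fun g => ((addOrderOf g : ℚ))⁻¹)).sum

/-- `G₀` is an LCN-set if every atom over `G₀` has cross number at least 1. -/
def IsLCNSet (G₀ : Set G) : Prop :=
  ∀ U : Multiset G, IsAtomSeq G₀ U → 1 ≤ crossNumber U

/-- A subset of `G \ {0}` is independent if any integral linear relation on its elements
has all summands zero. -/
def IsIndependentSet (E : Set G) : Prop :=
  (0 : G) ∉ E ∧ ∀ s : Finset G, ↑s ⊆ E → ∀ f : G → ℤ,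
    (∑ e ∈ s, f e • e) = 0 → ∀ e ∈ s, f e • e = 0

/-- `d` is a greatest common divisor of the set `S` of naturals. -/
def IsSetGcd (S : Set ℕ) (d : ℕ) : Prop :=
  (∀ s ∈ S, d ∣ s) ∧ ∀ e : ℕ, (∀ s ∈ S, e ∣ s) → e ∣ d

end Defs

/-- The set of minimal distances `Δ*(G)`. -/
def DeltaStar (G : Type*) [AddCommGroup G] : Set ℕ :=
  {d | ∃ G₀ : Set G, (DeltaSet G₀).Nonempty ∧ d = sInf (DeltaSet G₀)}

/-- The `p`-rank of a finite abelian group: `log_p` of the order of the `p`-torsion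
subgroup `{x | p • x = 0}`. -/
noncomputable def pRank (G : Type*) [AddCommGroup G] (p : ℕ) : ℕ :=
  Nat.log p (Nat.card {x : G // p • x = 0})

/-- The rank of a finite abelian group: the maximum of the `p`-ranks over all primes. -/
noncomputable def rankG (G : Type*) [AddCommGroup G] : ℕ :=
  sSup {r : ℕ | ∃ p : ℕ, p.Prime ∧ r = pRank G p}

section DeltaOf

variable {L S : Set ℕ} {k M : ℕ}

theorem deltaOf_subset_singleton (hS : S.OrdConnected)
    (hL : ∀ ℓ, ℓ ∈ L ↔ ∃ u ∈ S, ℓ + k * u = M) : DeltaOf L ⊆ {k} := by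
  rintro d ⟨x, hx, y, hy, hxy, rfl, hgap⟩
  obtain ⟨ux, hux, hx⟩ := (hL x).1 hx
  obtain ⟨uy, huy, hy⟩ := (hL y).1 hy
  have hlt : k * uy < k * ux := by omega
  have hk : 0 < k := Nat.pos_of_ne_zero (by rintro rfl; simp at hlt)
  have hu : uy < ux := Nat.lt_of_mul_lt_mul_left hlt
  have hstep := mul_add_one k uy
  rcases (show ux = uy + 1 ∨ uy + 1 < ux by omega) with rfl | hu'
  · show y - x = k
    omega
  · -- otherwise the length `M - k (uy + 1)` would lie strictly between `x` and `y`
    exfalso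
    have hmid : k * (uy + 1) < k * ux := Nat.mul_lt_mul_of_pos_left hu' hk
    refine hgap (M - k * (uy + 1)) ((hL _).2 ⟨uy + 1, hS.out huy hux ⟨by omega, hu'.le⟩, ?_⟩) ?_
    · omega
    · omega

theorem mem_deltaOf_of_add_one_mem (hL : ∀ ℓ, ℓ ∈ L ↔ ∃ u ∈ S, ℓ + k * u = M) (hk : 0 < k) {u : ℕ}
    (hu : u ∈ S) (hu' : u + 1 ∈ S) (hM : k * (u + 1) ≤ M) : k ∈ DeltaOf L := by
  have hstep := mul_add_one k u
  refine ⟨M - k * (u + 1), (hL _).2 ⟨u + 1, hu', by omega⟩,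
    M - k * u, (hL _).2 ⟨u, hu, by omega⟩, by omega, by omega, ?_⟩
  rintro z hz ⟨hlo, hhi⟩
  obtain ⟨v, -, hv⟩ := (hL z).1 hz
  have h1 : u < v := Nat.lt_of_mul_lt_mul_left (a := k) (by omega)
  have h2 : v < u + 1 := Nat.lt_of_mul_lt_mul_left (a := k) (by omega)
  omega

end DeltaOf

section Counts

variable {p s a a' u u' ℓ : ℕ} {b b' : Fin s → ℕ}

/-- The exponent vectors `(a, b)` of the atoms `e₀^a ∏ eᵢ^(bᵢ)`, described without the group:
the minimal nonzero solutions of `p ∣ a + bᵢ` for all `i`. -/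
def IsMinZeroSumCounts (p a : ℕ) (b : Fin s → ℕ) : Prop :=
  (∀ i, p ∣ a + b i) ∧ (a ≠ 0 ∨ b ≠ 0) ∧
    ∀ a' ≤ a, ∀ b' ≤ b, (∀ i, p ∣ a' + b' i) → a' = 0 ∧ b' = 0 ∨ a' = a ∧ b' = b

theorem isMinZeroSumCounts_single (hp : 0 < p) (i : Fin s) :
    IsMinZeroSumCounts p 0 (Pi.single i p) := by
  refine ⟨fun j => ?_, Or.inr fun h => hp.ne' (by simpa using congr_fun h i), ?_⟩
  · by_cases hj : j = i
    · subst hj; simp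
    · simp [hj]
  intro a' ha' b' hb' hdvd
  obtain rfl : a' = 0 := Nat.le_zero.1 ha'
  have hoff : ∀ j, j ≠ i → b' j = 0 := fun j hj => by simpa [hj] using hb' j
  have hi : b' i ≤ p := by simpa using hb' i
  rcases Nat.eq_zero_or_pos (b' i) with h | h
  · refine Or.inl ⟨rfl, funext fun j => ?_⟩
    by_cases hj : j = i
    · subst hj; simpa using h
    · simpa using hoff j hj
  · have hpi : p ≤ b' i := Nat.le_of_dvd h (by simpa using hdvd i)
    refine Or.inr ⟨rfl, funext fun j => ?_⟩
    by_cases hj : j = i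
    · subst hj; simp only [Pi.single_eq_same]; omega
    · simp [hj, hoff j hj]

theorem isMinZeroSumCounts_const (hs : s ≠ 0) (ha : 1 ≤ a) (hap : a ≤ p) :
    IsMinZeroSumCounts p a (fun _ : Fin s => p - a) := by
  refine ⟨fun i => by simp [Nat.add_sub_cancel' hap], Or.inl (by omega), ?_⟩
  intro a' ha' b' hb' hdvd
  have hb'le : ∀ i, b' i ≤ p - a := hb'
  have hfull : ∀ i, 0 < a' + b' i → a' + b' i = p := fun i h =>
    le_antisymm (by have := hb'le i; omega) (Nat.le_of_dvd h (hdvd i))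
  rcases Nat.eq_zero_or_pos a' with rfl | ha'0
  · refine Or.inl ⟨rfl, funext fun i => ?_⟩
    by_contra h
    have := hfull i (by simp only [Pi.zero_apply] at h; omega)
    have := hb'le i
    omega
  · have i₀ : Fin s := ⟨0, Nat.pos_of_ne_zero hs⟩
    have h₀ := hfull i₀ (by omega)
    have := hb'le i₀
    refine Or.inr ⟨by omega, funext fun i => ?_⟩
    have := hfull i (by omega)
    omega

theorem IsMinZeroSumCounts.eq_single_or_eq_const (h : IsMinZeroSumCounts p a b) (hp : 0 < p) :
    (a = 0 ∧ ∃ i, b = Pi.single i p) ∨ (1 ≤ a ∧ a ≤ p ∧ b = fun _ => p - a) := by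
  obtain ⟨hdvd, hne, hmin⟩ := h
  rcases Nat.eq_zero_or_pos a with rfl | ha
  · obtain ⟨i, hi⟩ : ∃ i, b i ≠ 0 := by
      simpa [funext_iff] using hne
    have hpi : p ≤ b i := Nat.le_of_dvd (Nat.pos_of_ne_zero hi) (by simpa using hdvd i)
    have hle : Pi.single i p ≤ b := fun j => by
      by_cases hj : j = i
      · subst hj; simpa using hpi
      · simp [hj]
    rcases hmin 0 le_rfl _ hle (isMinZeroSumCounts_single hp i).1 with ⟨-, h0⟩ | ⟨-, hb⟩
    · exact absurd (congr_fun h0 i) (by simp only [Pi.single_eq_same, Pi.zero_apply]; omega)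
    · exact Or.inl ⟨rfl, i, hb.symm⟩
  · have hle : (fun _ => p - min a p) ≤ b := fun i => by
      have := Nat.le_of_dvd (by omega) (hdvd i)
      simp only
      omega
    rcases hmin (min a p) (min_le_left _ _) _ hle
      (fun i => by rw [Nat.add_sub_cancel' (min_le_right _ _)]) with ⟨h0, -⟩ | ⟨ha', hb⟩
    · omega
    · refine Or.inr ⟨ha, by omega, ?_⟩
      rw [← hb, ha']

/-- The possible numbers of atoms containing `e₀` in a factorization of `e₀^a ∏ eᵢ^(bᵢ)`. -/
def admissibleCounts (p a : ℕ) (b : Fin s → ℕ) : Set ℕ :=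
  {u | a ≤ p * u ∧ (∀ i, p * u ≤ a + b i) ∧ u ≤ a}

theorem ordConnected_admissibleCounts : (admissibleCounts p a b).OrdConnected :=
  ⟨fun _ hx _ hz _ hy => ⟨hx.1.trans (Nat.mul_le_mul_left p hy.1),
    fun i => (Nat.mul_le_mul_left p hy.2).trans (hz.2.1 i), hy.2.trans hz.2.2⟩⟩

theorem add_mem_admissibleCounts (hu : u ∈ admissibleCounts p a b)
    (hu' : u' ∈ admissibleCounts p a' b') : u + u' ∈ admissibleCounts p (a + a') (b + b') := by
  obtain ⟨h1, h2, h3⟩ := hu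
  obtain ⟨h1', h2', h3'⟩ := hu'
  refine ⟨by rw [mul_add]; omega, fun i => ?_, by omega⟩
  have := h2 i
  have := h2' i
  simp only [Pi.add_apply, mul_add]
  omega

theorem IsMinZeroSumCounts.exists_mem_admissibleCounts (h : IsMinZeroSumCounts p a b)
    (hp : 0 < p) (hs : s ≠ 0) :
    ∃ u ∈ admissibleCounts p a b, p * (1 + (s - 1) * u) = ∑ i, (a + b i) := by
  rcases h.eq_single_or_eq_const hp with ⟨rfl, i, rfl⟩ | ⟨h1, h2, rfl⟩
  · exact ⟨0, ⟨by simp, by simp, le_rfl⟩, by simp [Finset.sum_pi_single']⟩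
  · refine ⟨1, ⟨by simpa using h2, fun i => by simp only; omega, h1⟩, ?_⟩
    obtain ⟨t, rfl⟩ : ∃ t, s = t + 1 := ⟨s - 1, by omega⟩
    simp only [add_tsub_cancel_right, mul_one, Nat.add_sub_cancel' h2, Finset.sum_const,
      Finset.card_univ, Fintype.card_fin, smul_eq_mul]
    ring

theorem eq_zero_of_mem_admissibleCounts (hp : 0 < p) (hs : s ≠ 0)
    (hu : u ∈ admissibleCounts p a b) (h : p * ((s - 1) * u) = ∑ i, (a + b i)) :
    a = 0 ∧ b = 0 := by
  have hle : s * (p * u) ≤ ∑ i, (a + b i) := by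
    simpa using Finset.sum_le_sum fun i (_ : i ∈ Finset.univ) => hu.2.1 i
  obtain ⟨t, rfl⟩ : ∃ t, s = t + 1 := ⟨s - 1, by omega⟩
  obtain rfl : u = 0 := by
    simp only [add_tsub_cancel_right] at h
    have : p * u = 0 := by nlinarith
    simpa [hp.ne'] using this
  simp only [mul_zero, eq_comm (a := 0), Finset.sum_eq_zero_iff, Finset.mem_univ,
    forall_const, Nat.add_eq_zero_iff] at h
  exact ⟨(h 0).1, funext fun i => (h i).2⟩

-- The two steps of the greedy factorization: split off `eᵢ^p` when no `e₀` is left, and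
-- `e₀^j ∏ eᵢ^(p-j)` otherwise.
theorem exists_eq_single_add (hp : 0 < p) (hdvd : ∀ i, p ∣ b i)
    (h : p * (ℓ + 1) = ∑ i, b i) :
    ∃ i, ∃ b' : Fin s → ℕ, b = Pi.single i p + b' ∧ (∀ j, p ∣ b' j) ∧ p * ℓ = ∑ i, b' i := by
  obtain ⟨i, -, hi⟩ := Finset.exists_ne_zero_of_sum_ne_zero (s := Finset.univ) (f := b)
    (by rw [← h]; positivity)
  have hpi : p ≤ b i := Nat.le_of_dvd (Nat.pos_of_ne_zero hi) (hdvd i)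
  obtain ⟨b', rfl⟩ : ∃ b', b = Pi.single i p + b' := ⟨b - Pi.single i p, funext fun j => by
    by_cases hj : j = i
    · subst hj; simp only [Pi.add_apply, Pi.single_eq_same, Pi.sub_apply]; omega
    · simp [hj]⟩
  refine ⟨i, b', rfl, fun j => (Nat.dvd_add_right ?_).1 (hdvd j), ?_⟩
  · by_cases hj : j = i
    · subst hj; simp
    · simp [hj]
  · simp only [Pi.add_apply, Finset.sum_add_distrib, Finset.sum_pi_single', Finset.mem_univ,
      if_true] at h
    rw [mul_add_one] at h
    omega

theorem exists_eq_const_add (hp : 0 < p) (hs : s ≠ 0) (hdvd : ∀ i, p ∣ a + b i)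
    (hu : u + 1 ∈ admissibleCounts p a b)
    (h : p * (ℓ + 1 + (s - 1) * (u + 1)) = ∑ i, (a + b i)) :
    ∃ j a', ∃ b' : Fin s → ℕ, 1 ≤ j ∧ j ≤ p ∧ a = j + a' ∧ b = (fun _ => p - j) + b' ∧
      (∀ i, p ∣ a' + b' i) ∧ u ∈ admissibleCounts p a' b' ∧
      p * (ℓ + (s - 1) * u) = ∑ i, (a' + b' i) := by
  obtain ⟨h1, h2, h3⟩ := hu
  have hstep := mul_add_one p u
  have hpu : u ≤ p * u := Nat.le_mul_of_pos_left u hp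
  -- `j = max 1 (a - p u)` leaves between `u` and `p u` copies of `e₀` for the other `u` atoms
  obtain ⟨j, hj1, hjp, hja, hju⟩ : ∃ j, 1 ≤ j ∧ j ≤ p ∧ a - p * u ≤ j ∧ j + u ≤ a :=
    ⟨max 1 (a - p * u), le_max_left _ _, max_le (by omega) (by omega), le_max_right _ _,
      by omega⟩
  obtain ⟨a', rfl⟩ : ∃ a', a = j + a' := ⟨a - j, by omega⟩
  obtain ⟨b', rfl⟩ : ∃ b', b = (fun _ => p - j) + b' := ⟨b - fun _ => p - j, funext fun i => by
    have := h2 i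
    simp only [Pi.add_apply, Pi.sub_apply]
    omega⟩
  have hsplit : ∀ i, j + a' + ((fun _ => p - j) + b' : Fin s → ℕ) i = p + (a' + b' i) := fun i => by
    simp only [Pi.add_apply]; omega
  refine ⟨j, a', b', hj1, hjp, rfl, rfl, fun i => ?_, ⟨by omega, fun i => ?_, by omega⟩, ?_⟩
  · exact (Nat.dvd_add_right dvd_rfl).1 (hsplit i ▸ hdvd i)
  · have := h2 i
    rw [hsplit] at this
    omega
  · rw [Finset.sum_congr rfl fun i _ => hsplit i, Finset.sum_add_distrib] at h
    obtain ⟨t, rfl⟩ : ∃ t, s = t + 1 := ⟨s - 1, by omega⟩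
    simp only [Finset.sum_const, Finset.card_univ, Fintype.card_fin, smul_eq_mul,
      add_tsub_cancel_right] at h ⊢
    linarith

end Counts

section Factorization

variable {G : Type*} [AddCommGroup G] {G₀ : Set G} {S A B : Multiset G} {ℓ : ℕ}

theorem isAtomSeq_iff : IsAtomSeq G₀ S ↔
    IsZeroSumSeq G₀ S ∧ S ≠ 0 ∧ ∀ T ≤ S, IsZeroSumSeq G₀ T → T = 0 ∨ T = S := by
  classical
  refine ⟨fun ⟨hS, hS0, hsplit⟩ => ⟨hS, hS0, fun T hT hTz => ?_⟩,
    fun ⟨hS, hS0, hmin⟩ => ⟨hS, hS0, ?_⟩⟩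
  · have hST : S = T + (S - T) := (add_tsub_cancel_of_le hT).symm
    have hrest : IsZeroSumSeq G₀ (S - T) := by
      refine ⟨fun x hx => hS.1 x (mem_of_le (Multiset.sub_le_self S T) hx), ?_⟩
      have := congr_arg Multiset.sum hST
      rwa [sum_add, hTz.2, hS.2, zero_add, eq_comm] at this
    by_contra! h
    refine hsplit T (S - T) hTz hrest h.1 (fun h0 => h.2 ?_) hST
    rw [hST, h0, add_zero]
  · rintro A B hA - hA0 hB0 rfl
    rcases hmin A (le_add_right le_rfl) hA with h | h
    · exact hA0 h
    · exact hB0 (by simpa using h)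

theorem zero_mem_lengthSet_zero : 0 ∈ LengthSet G₀ 0 :=
  ⟨0, rfl, by simp, rfl⟩

theorem add_one_mem_lengthSet_add (hA : IsAtomSeq G₀ A) (hB : ℓ ∈ LengthSet G₀ B) :
    ℓ + 1 ∈ LengthSet G₀ (A + B) := by
  obtain ⟨l, rfl, hl, rfl⟩ := hB
  exact ⟨A ::ₘ l, by simp, forall_mem_cons.2 ⟨hA, hl⟩, by simp⟩

end Factorization

section MonomialSeq

variable {G : Type*} [AddCommGroup G] {p s a a' u ℓ : ℕ} {b b' : Fin s → ℕ} {e : Fin s → G}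
  {S T : Multiset G}

local notation "G₀" => ({∑ i, e i} ∪ Set.range e : Set G)

def monomialSeq (e : Fin s → G) (a : ℕ) (b : Fin s → ℕ) : Multiset G :=
  replicate a (∑ i, e i) + ∑ i, replicate (b i) (e i)

theorem monomialSeq_add :
    monomialSeq e (a + a') (b + b') = monomialSeq e a b + monomialSeq e a' b' := by
  simp only [monomialSeq, replicate_add, Pi.add_apply, Finset.sum_add_distrib]
  abel

theorem monomialSeq_eq_zero_iff : monomialSeq e a b = 0 ↔ a = 0 ∧ b = 0 := by
  simp [monomialSeq, Finset.sum_eq_zero_iff, funext_iff, ← card_eq_zero]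

theorem monomialSeq_le (ha : a' ≤ a) (hb : b' ≤ b) : monomialSeq e a' b' ≤ monomialSeq e a b := by
  obtain ⟨c, rfl⟩ := Nat.exists_eq_add_of_le ha
  obtain ⟨d, rfl⟩ : ∃ d, b = b' + d := ⟨b - b', funext fun i => by
    have : b' i ≤ b i := hb i
    simp only [Pi.add_apply, Pi.sub_apply]
    omega⟩
  rw [monomialSeq_add]
  exact le_add_right le_rfl

theorem mem_of_mem_monomialSeq {x : G} (hx : x ∈ monomialSeq e a b) : x ∈ G₀ := by
  simp only [monomialSeq, mem_add, Multiset.mem_sum, Finset.mem_univ, true_and] at hx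
  rcases hx with hx | ⟨i, hi⟩
  · exact Or.inl (eq_of_mem_replicate hx)
  · exact Or.inr ⟨i, (eq_of_mem_replicate hi).symm⟩

theorem sum_monomialSeq : (monomialSeq e a b).sum = ∑ i, (a + b i) • e i := by
  simp [monomialSeq, add_smul, Finset.sum_add_distrib, Finset.smul_sum, Multiset.sum_sum]

/-- `e` is a basis of an elementary abelian `p`-group, i.e. of a copy of `C_p^s`. -/
def IsIndependentOfOrder (p : ℕ) (e : Fin s → G) : Prop :=
  ∀ f : Fin s → ℤ, ∑ i, f i • e i = 0 ↔ ∀ i, (p : ℤ) ∣ f i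

theorem isIndependentOfOrder_of_addOrderOf (hord : ∀ i, addOrderOf (e i) = p)
    (hindep : ∀ f : Fin s → ℤ, (∑ i, f i • e i) = 0 → ∀ i, f i • e i = 0) :
    IsIndependentOfOrder p e := fun f =>
  ⟨fun h i => hord i ▸ addOrderOf_dvd_iff_zsmul_eq_zero.2 (hindep f h i),
    fun h => Finset.sum_eq_zero fun i _ => addOrderOf_dvd_iff_zsmul_eq_zero.1 (hord i ▸ h i)⟩

namespace IsIndependentOfOrder

variable (he : IsIndependentOfOrder p e)
include he

theorem sum_nsmul_eq_zero_iff (n : Fin s → ℕ) : ∑ i, n i • e i = 0 ↔ ∀ i, p ∣ n i := by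
  simpa [natCast_zsmul, Int.natCast_dvd_natCast] using he fun i => n i

theorem injective (hp : p ≠ 1) : Function.Injective e := by
  intro i j hij
  by_contra hne
  have := (he (Pi.single i 1 - Pi.single j 1)).1
    (by simp [sub_smul, Finset.sum_sub_distrib, Pi.single_apply, hij]) i
  simp only [Pi.sub_apply, Pi.single_eq_same, ne_eq, hne, not_false_eq_true, Pi.single_eq_of_ne,
    sub_zero] at this
  exact hp (Nat.dvd_one.1 (by exact_mod_cast this))

theorem sum_ne (hp : p ≠ 1) (hs : 2 ≤ s) (i : Fin s) : ∑ j, e j ≠ e i := by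
  intro h
  have : Nontrivial (Fin s) := Fin.nontrivial_iff_two_le.2 hs
  obtain ⟨j, hj⟩ := exists_ne i
  have := (he (1 - Pi.single i 1)).1
    (by simp [sub_smul, Finset.sum_sub_distrib, Pi.single_apply, h]) j
  simp only [Pi.sub_apply, Pi.one_apply, ne_eq, hj, not_false_eq_true, Pi.single_eq_of_ne,
    sub_zero] at this
  exact hp (Nat.dvd_one.1 (by exact_mod_cast this))

theorem count_sum_monomialSeq [DecidableEq G] (hp : p ≠ 1) (hs : 2 ≤ s) :
    count (∑ i, e i) (monomialSeq e a b) = a := by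
  simp [monomialSeq, count_replicate, count_sum', (he.sum_ne hp hs _).symm]

theorem count_monomialSeq [DecidableEq G] (hp : p ≠ 1) (hs : 2 ≤ s) (i : Fin s) :
    count (e i) (monomialSeq e a b) = b i := by
  simp [monomialSeq, count_replicate, count_sum', he.sum_ne hp hs, (he.injective hp).eq_iff]

theorem eq_monomialSeq_count [DecidableEq G] (hp : p ≠ 1) (hs : 2 ≤ s) (hS : ∀ x ∈ S, x ∈ G₀) :
    S = monomialSeq e (count (∑ i, e i) S) (fun i => count (e i) S) := by
  ext x
  by_cases hx : x ∈ G₀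
  · rcases hx with hx | ⟨i, rfl⟩
    · rw [Set.mem_singleton_iff.1 hx, he.count_sum_monomialSeq hp hs]
    · rw [he.count_monomialSeq hp hs]
  · rw [count_eq_zero.2 (mt (hS x) hx), count_eq_zero.2 (mt mem_of_mem_monomialSeq hx)]

theorem monomialSeq_inj (hp : p ≠ 1) (hs : 2 ≤ s) :
    monomialSeq e a b = monomialSeq e a' b' ↔ a = a' ∧ b = b' := by
  classical
  refine ⟨fun h => ⟨?_, funext fun i => ?_⟩, fun ⟨ha, hb⟩ => ha ▸ hb ▸ rfl⟩
  · simpa [he.count_sum_monomialSeq hp hs] using congr_arg (count (∑ i, e i)) h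
  · simpa [he.count_monomialSeq hp hs] using congr_arg (count (e i)) h

theorem exists_monomialSeq_of_le (hp : p ≠ 1) (hs : 2 ≤ s) (hT : T ≤ monomialSeq e a b) :
    ∃ a' ≤ a, ∃ b' ≤ b, T = monomialSeq e a' b' := by
  classical
  refine ⟨count (∑ i, e i) T, ?_, fun i => count (e i) T, fun i => ?_,
    he.eq_monomialSeq_count hp hs fun x hx => mem_of_mem_monomialSeq (mem_of_le hT hx)⟩
  · simpa [he.count_sum_monomialSeq hp hs] using count_le_of_le (∑ i, e i) hT
  · simpa [he.count_monomialSeq hp hs] using count_le_of_le (e i) hT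

theorem isZeroSumSeq_monomialSeq_iff :
    IsZeroSumSeq G₀ (monomialSeq e a b) ↔ ∀ i, p ∣ a + b i := by
  rw [IsZeroSumSeq, sum_monomialSeq, he.sum_nsmul_eq_zero_iff]
  exact and_iff_right fun _ => mem_of_mem_monomialSeq

theorem isAtomSeq_monomialSeq_iff (hp : p ≠ 1) (hs : 2 ≤ s) :
    IsAtomSeq G₀ (monomialSeq e a b) ↔ IsMinZeroSumCounts p a b := by
  rw [isAtomSeq_iff, he.isZeroSumSeq_monomialSeq_iff, Ne, monomialSeq_eq_zero_iff, not_and_or]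
  refine and_congr_right fun _ => and_congr_right fun _ =>
    ⟨fun h a' ha' b' hb' hdvd => ?_, fun h T hT hTz => ?_⟩
  · rcases h _ (monomialSeq_le ha' hb') (he.isZeroSumSeq_monomialSeq_iff.2 hdvd) with h0 | heq
    · exact Or.inl (monomialSeq_eq_zero_iff.1 h0)
    · exact Or.inr ((he.monomialSeq_inj hp hs).1 heq)
  · obtain ⟨a', ha', b', hb', rfl⟩ := he.exists_monomialSeq_of_le hp hs hT
    rcases h a' ha' b' hb' (he.isZeroSumSeq_monomialSeq_iff.1 hTz) with ⟨rfl, rfl⟩ | ⟨rfl, rfl⟩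
    · exact Or.inl (monomialSeq_eq_zero_iff.2 ⟨rfl, rfl⟩)
    · exact Or.inr rfl

theorem exists_mem_admissibleCounts_of_factorization [DecidableEq G] (hp : 1 < p) (hs : 2 ≤ s)
    {l : Multiset (Multiset G)} (hl : ∀ A ∈ l, IsAtomSeq G₀ A) :
    ∃ u ∈ admissibleCounts p (count (∑ i, e i) l.sum) (fun i => count (e i) l.sum),
      p * (card l + (s - 1) * u) = ∑ i, (count (∑ i, e i) l.sum + count (e i) l.sum) := by
  induction l using Multiset.induction with
  | empty => exact ⟨0, by simp [admissibleCounts], by simp⟩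
  | cons A l ih =>
    obtain ⟨u, hu, hlen⟩ := ih fun B hB => hl B (mem_cons_of_mem hB)
    have hA := hl A (mem_cons_self A l)
    have hAeq := he.eq_monomialSeq_count hp.ne' hs hA.1.1
    rw [hAeq, he.isAtomSeq_monomialSeq_iff hp.ne' hs] at hA
    obtain ⟨v, hv, hAlen⟩ := hA.exists_mem_admissibleCounts (by omega) (by omega)
    refine ⟨v + u, by simp only [sum_cons, count_add]; exact add_mem_admissibleCounts hv hu, ?_⟩
    simp only [sum_cons, card_cons, count_add, add_add_add_comm _ (count _ l.sum),
      Finset.sum_add_distrib, ← hAlen, ← hlen]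
    ring

theorem mem_lengthSet_of_mem_admissibleCounts (hp : 1 < p) (hs : 2 ≤ s)
    (hdvd : ∀ i, p ∣ a + b i) (hu : u ∈ admissibleCounts p a b)
    (hℓ : p * (ℓ + (s - 1) * u) = ∑ i, (a + b i)) : ℓ ∈ LengthSet G₀ (monomialSeq e a b) := by
  induction ℓ generalizing a b u with
  | zero =>
    obtain ⟨rfl, rfl⟩ :=
      eq_zero_of_mem_admissibleCounts (by omega) (by omega) hu (by simpa using hℓ)
    simpa [monomialSeq_eq_zero_iff.2] using (zero_mem_lengthSet_zero : 0 ∈ LengthSet G₀ 0)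
  | succ ℓ ih =>
    rcases u with _ | u
    · obtain rfl : a = 0 := by simpa using hu.1
      obtain ⟨i, b', rfl, hdvd', hℓ'⟩ :=
        exists_eq_single_add (by omega : 0 < p) (by simpa using hdvd) (by simpa using hℓ)
      rw [show monomialSeq e 0 (Pi.single i p + b') =
          monomialSeq e 0 (Pi.single i p) + monomialSeq e 0 b' by rw [← monomialSeq_add, zero_add]]
      exact add_one_mem_lengthSet_add
        ((he.isAtomSeq_monomialSeq_iff hp.ne' hs).2 (isMinZeroSumCounts_single (by omega) i))
        (ih (u := 0) (by simpa using hdvd') ⟨by simp, by simp, le_rfl⟩ (by simpa using hℓ'))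
    · obtain ⟨j, a', b', hj1, hjp, rfl, rfl, hdvd', hu', hℓ'⟩ :=
        exists_eq_const_add (by omega) (by omega) hdvd hu hℓ
      rw [monomialSeq_add]
      exact add_one_mem_lengthSet_add
        ((he.isAtomSeq_monomialSeq_iff hp.ne' hs).2 (isMinZeroSumCounts_const (by omega) hj1 hjp))
        (ih hdvd' hu' hℓ')

theorem mem_lengthSet_monomialSeq_iff (hp : 1 < p) (hs : 2 ≤ s) (hdvd : ∀ i, p ∣ a + b i)
    {M : ℕ} (hM : ∑ i, (a + b i) = p * M) :
    ℓ ∈ LengthSet G₀ (monomialSeq e a b) ↔ ∃ u ∈ admissibleCounts p a b, ℓ + (s - 1) * u = M := by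
  classical
  constructor
  · rintro ⟨l, rfl, hl, hsum⟩
    obtain ⟨u, hu, hlen⟩ := he.exists_mem_admissibleCounts_of_factorization hp hs hl
    simp only [hsum, he.count_sum_monomialSeq hp.ne' hs, he.count_monomialSeq hp.ne' hs] at hu hlen
    exact ⟨u, hu, Nat.eq_of_mul_eq_mul_left (by omega) (hlen.trans hM)⟩
  · rintro ⟨u, hu, rfl⟩
    exact he.mem_lengthSet_of_mem_admissibleCounts hp hs hdvd hu hM.symm

theorem deltaSet_eq (hp : 1 < p) (hs : 2 ≤ s) : DeltaSet G₀ = {s - 1} := by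
  classical
  refine Set.Subset.antisymm ?_ (Set.singleton_subset_iff.2 ?_)
  · rintro d ⟨B, hB, -, hd⟩
    have hBeq := he.eq_monomialSeq_count hp.ne' hs hB.1
    rw [hBeq] at hB hd
    have hdvd := he.isZeroSumSeq_monomialSeq_iff.1 hB
    obtain ⟨M, hM⟩ := Finset.dvd_sum fun i (_ : i ∈ Finset.univ) => hdvd i
    exact deltaOf_subset_singleton ordConnected_admissibleCounts
      (fun ℓ => he.mem_lengthSet_monomialSeq_iff hp hs hdvd hM) hd
  · -- `e₀^p ∏ eᵢ^p` has factorizations with one and with two atoms containing `e₀`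
    have hdvd : ∀ i : Fin s, p ∣ p + (fun _ => p) i := fun _ => ⟨2, by ring⟩
    have hM : ∑ i : Fin s, (p + (fun _ => p) i) = p * (2 * s) := by
      simp only [Finset.sum_const, Finset.card_univ, Fintype.card_fin, smul_eq_mul]
      ring
    refine ⟨monomialSeq e p (fun _ => p), he.isZeroSumSeq_monomialSeq_iff.2 hdvd,
      fun h => by have := (monomialSeq_eq_zero_iff.1 h).1; omega, ?_⟩
    exact mem_deltaOf_of_add_one_mem (fun ℓ => he.mem_lengthSet_monomialSeq_iff hp hs hdvd hM)
      (by omega) (u := 1) ⟨by simp, fun _ => by simp, by omega⟩ ⟨by omega, fun _ => (mul_two p).le, by omega⟩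
      (by omega)

end IsIndependentOfOrder

end MonomialSeq

section Rank

variable {H : Type*} [AddCommGroup H] [Finite H]

theorem exists_prime_rankG_eq_pRank : ∃ p, p.Prime ∧ rankG H = pRank H p := by
  have hbdd : BddAbove {r : ℕ | ∃ p : ℕ, p.Prime ∧ r = pRank H p} := by
    refine ⟨Nat.log 2 (Nat.card H), ?_⟩
    rintro r ⟨p, hp, rfl⟩
    exact (Nat.log_anti_left (by norm_num) hp.two_le).trans
      (Nat.log_mono_right (Finite.card_subtype_le _))
  exact Nat.sSup_mem (s := {r | ∃ p : ℕ, p.Prime ∧ r = pRank H p})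
    ⟨pRank H 2, 2, Nat.prime_two, rfl⟩ hbdd

theorem exists_isIndependentOfOrder_of_le_pRank {p n : ℕ} (hp : p.Prime) (hn : n ≤ pRank H p) :
    ∃ e : Fin n → H, IsIndependentOfOrder p e := by
  have : Fact p.Prime := ⟨hp⟩
  obtain ⟨T, hT⟩ : ∃ T : AddSubgroup H, ∀ x, x ∈ T ↔ p • x = 0 :=
    ⟨(nsmulAddMonoidHom p).ker, fun _ => AddMonoidHom.mem_ker⟩
  let _ : Module (ZMod p) T := AddCommGroup.zmodModule fun x => Subtype.ext ((hT x).1 x.2)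
  have hrank : pRank H p = Module.finrank (ZMod p) T := by
    rw [pRank, ← Nat.card_congr (Equiv.subtypeEquivRight hT),
      @Module.natCard_eq_pow_finrank (ZMod p) T _ _ _ Module.Finite.of_finite, Nat.card_zmod,
      Nat.log_pow hp.one_lt]
  obtain ⟨v, hv⟩ := exists_linearIndependent_of_le_finrank (hrank ▸ hn)
  refine ⟨fun i => v i, fun f => ?_⟩
  have hcoe : ∑ i, f i • (v i : H) = ((∑ i, (f i : ZMod p) • v i : T) : H) := by
    simp [Int.cast_smul_eq_zsmul]
  simp_rw [hcoe, ZeroMemClass.coe_eq_zero, ← ZMod.intCast_zmod_eq_zero_iff_dvd]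
  exact ⟨Fintype.linearIndependent_iff.1 hv _, fun h => by simp [h]⟩

theorem Icc_subset_deltaStar (H : Type*) [AddCommGroup H] [Finite H] :
    Set.Icc 1 (rankG H - 1) ⊆ DeltaStar H := by
  rintro d ⟨hd1, hd2⟩
  obtain ⟨p, hp, hrank⟩ := exists_prime_rankG_eq_pRank (H := H)
  obtain ⟨e, he⟩ := exists_isIndependentOfOrder_of_le_pRank (H := H) hp (n := d + 1) (by omega)
  have hΔ := he.deltaSet_eq hp.one_lt (by omega)
  refine ⟨_, hΔ ▸ Set.singleton_nonempty _, ?_⟩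
  rw [hΔ, csInf_singleton, Nat.add_sub_cancel]

end Rank

theorem stmt_3_general {G : Type*} [AddCommGroup G] (p s : ℕ) (hp : p.Prime)
    (hs : 2 ≤ s) (e : Fin s → G)
    (hord : ∀ i, addOrderOf (e i) = p)
    (hindep : ∀ f : Fin s → ℤ, (∑ i, f i • e i) = 0 → ∀ i, f i • e i = 0) :
    DeltaSet (({∑ i, e i} ∪ Set.range e : Set G)) = {s - 1} ∧
    (∀ (H : Type*) [AddCommGroup H] [Fintype H], 2 ≤ rankG H →
      Set.Icc 1 (rankG H - 1) ⊆ DeltaStar H) :=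
  ⟨(isIndependentOfOrder_of_addOrderOf hord hindep).deltaSet_eq hp.one_lt hs,
    fun H _ _ _ => Icc_subset_deltaStar H⟩

/-- For a basis `(e₁,…,e_s)` of `G = C_p^s` with `p` prime and `s ≥ 2`,
setting `e₀ = e₁ + … + e_s` and `G₀ = {e₀, e₁, …, e_s}`, one has `Δ(G₀) = {s-1}`.
Consequently, every finite abelian group `H` with `r(H) ≥ 2` satisfies
`[1, r(H) − 1] ⊆ Δ*(H)`. -/
theorem stmt_3 {G : Type*} [AddCommGroup G] [Fintype G] (p s : ℕ) (hp : p.Prime)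
    (hs : 2 ≤ s) (e : Fin s → G)
    (hord : ∀ i, addOrderOf (e i) = p)
    (hindep : ∀ f : Fin s → ℤ, (∑ i, f i • e i) = 0 → ∀ i, f i • e i = 0)
    (hgen : AddSubgroup.closure (Set.range e) = ⊤) :
    DeltaSet (({∑ i, e i} ∪ Set.range e : Set G)) = {s - 1} ∧
    (∀ (H : Type*) [AddCommGroup H] [Fintype H], 2 ≤ rankG H →
      Set.Icc 1 (rankG H - 1) ⊆ DeltaStar H) :=
  stmt_3_general p s hp hs e hord hindep
end

section
/- Let G be a finite abelian group with |G| > 2 and G₀ ⊆ G a subset. If there exists an atom U over G₀ with cross number k(U) < 1, then G₀ is non-half-factorial and min Δ(G₀) ≤ exp(G) − 2. -/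
open Multiset

/-! Let `n = exp(G)`. The zero-sum sequence `Uⁿ` factors into `n` copies of the atom `U`, and also
into the atoms `g^ord(g)`, `n / ord(g)` of them for each `g ∈ U`: that is `n · k(U)` atoms in all.
Since `2 ≤ |U| ≤ n · k(U) < n`, the set of lengths of `Uⁿ` has two elements at distance at most
`n - 2`, hence so has some pair of consecutive ones. -/

lemma exists_mem_deltaOf_le_sub {L : Set ℕ} {x y : ℕ} (hx : x ∈ L) (hy : y ∈ L) (hxy : x < y) :
    ∃ d ∈ DeltaOf L, d ≤ y - x := by
  set S := {z | z ∈ L ∧ x < z}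
  obtain ⟨hzL, hxz⟩ : sInf S ∈ S := Nat.sInf_mem ⟨y, hy, hxy⟩
  have hzy : sInf S ≤ y := Nat.sInf_le ⟨hy, hxy⟩
  refine ⟨sInf S - x, ⟨x, hx, sInf S, hzL, hxz, rfl, ?_⟩, by omega⟩
  rintro z hz ⟨hxz', hzlt⟩
  exact (Nat.sInf_le ⟨hz, hxz'⟩ : sInf S ≤ z).not_gt hzlt

section ZeroSumSequences

variable {G : Type*} [AddCommGroup G] {G₀ : Set G}

lemma IsZeroSumSeq.nsmul {S : Multiset G} (hS : IsZeroSumSeq G₀ S) (n : ℕ) :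
    IsZeroSumSeq G₀ (n • S) :=
  ⟨fun x hx => hS.1 x (mem_of_mem_nsmul hx), by rw [sum_nsmul, hS.2, smul_zero]⟩

lemma isAtomSeq_replicate_addOrderOf {g : G} (hg : g ∈ G₀) (hfin : IsOfFinAddOrder g) :
    IsAtomSeq G₀ (replicate (addOrderOf g) g) := by
  have hpos := hfin.addOrderOf_pos
  refine ⟨⟨fun x hx => eq_of_mem_replicate hx ▸ hg, by simp [addOrderOf_nsmul_eq_zero]⟩,
    fun h => hpos.ne' (by simpa using congrArg card h), ?_⟩
  intro A B hA _ hA0 hB0 hAB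
  obtain ⟨k, -, rfl⟩ := le_replicate_iff.mp (hAB ▸ le_add_right A B)
  have hcard : k + card B = addOrderOf g := by simpa using (congrArg card hAB).symm
  have hk : 0 < k := by simpa using card_pos.mpr hA0
  have hkg : k • g = 0 := by simpa using hA.2
  have := addOrderOf_le_of_nsmul_eq_zero hk hkg
  have := card_pos.mpr hB0
  omega

lemma IsAtomSeq.two_le_card_of_crossNumber_lt_one {U : Multiset G} (hU : IsAtomSeq G₀ U)
    (hk : crossNumber U < 1) : 2 ≤ card U := by
  by_contra! hlt
  obtain ⟨g, rfl⟩ : ∃ g, U = {g} := card_eq_one.mp (by have := card_pos.mpr hU.2.1; omega)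
  obtain rfl : g = 0 := by simpa using hU.1.2
  simp [crossNumber] at hk

lemma nsmul_mem_lengthSet {U : Multiset G} (hU : IsAtomSeq G₀ U) (n : ℕ) :
    n ∈ LengthSet G₀ (n • U) :=
  ⟨replicate n U, card_replicate n U, fun _ hA => eq_of_mem_replicate hA ▸ hU, sum_replicate n U⟩

variable {U : Multiset G} {n : ℕ}

lemma sum_bind_replicate_div_addOrderOf (hdvd : ∀ g ∈ U, addOrderOf g ∣ n) :
    (U.bind fun g => replicate (n / addOrderOf g) (replicate (addOrderOf g) g)).sum = n • U := by
  induction U using Multiset.induction with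
  | empty => simp
  | cons a s ih =>
    rw [cons_bind, sum_add, ih fun g hg => hdvd g (mem_cons_of_mem hg), sum_replicate,
      nsmul_replicate, Nat.div_mul_cancel (hdvd a (mem_cons_self a s)), ← singleton_add, smul_add,
      nsmul_singleton]

lemma sum_map_div_addOrderOf_mem_lengthSet (hn : 0 < n) (hUG₀ : ∀ g ∈ U, g ∈ G₀)
    (hdvd : ∀ g ∈ U, addOrderOf g ∣ n) :
    (U.map fun g => n / addOrderOf g).sum ∈ LengthSet G₀ (n • U) := by
  refine ⟨U.bind fun g => replicate (n / addOrderOf g) (replicate (addOrderOf g) g),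
    by simp [card_bind], ?_, sum_bind_replicate_div_addOrderOf hdvd⟩
  simp only [mem_bind]
  rintro A ⟨g, hg, hA⟩
  exact eq_of_mem_replicate hA ▸ isAtomSeq_replicate_addOrderOf (hUG₀ g hg)
    (addOrderOf_pos_iff.mp (Nat.pos_of_dvd_of_pos (hdvd g hg) hn))

lemma card_le_sum_map_div_addOrderOf (hn : 0 < n) (hdvd : ∀ g ∈ U, addOrderOf g ∣ n) :
    card U ≤ (U.map fun g => n / addOrderOf g).sum := by
  simpa using sum_map_le_sum_map (fun _ => (1 : ℕ)) _ fun g hg =>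
    Nat.div_pos (Nat.le_of_dvd hn (hdvd g hg)) (Nat.pos_of_dvd_of_pos (hdvd g hg) hn)

lemma cast_sum_map_div_addOrderOf (hdvd : ∀ g ∈ U, addOrderOf g ∣ n) :
    ((U.map fun g => n / addOrderOf g).sum : ℚ) = n * crossNumber U := by
  rw [crossNumber, ← sum_map_mul_left, Nat.cast_multiset_sum, map_map]
  exact congrArg sum <| map_congr rfl fun g hg => by
    simp [Nat.cast_div_charZero (hdvd g hg), div_eq_mul_inv]

lemma exists_mem_deltaSet_le_sub {B : Multiset G} (hB : IsZeroSumSeq G₀ B) (hB0 : B ≠ 0)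
    {x y : ℕ} (hx : x ∈ LengthSet G₀ B) (hy : y ∈ LengthSet G₀ B) (hxy : x < y) :
    ∃ d ∈ DeltaSet G₀, d ≤ y - x :=
  let ⟨d, hd, hdle⟩ := exists_mem_deltaOf_le_sub hx hy hxy
  ⟨d, ⟨B, hB, hB0, hd⟩, hdle⟩

end ZeroSumSequences

theorem stmt_4_general {G : Type*} [AddCommGroup G] [Fintype G]
    (G₀ : Set G) (U : Multiset G) (hU : IsAtomSeq G₀ U) (hkU : crossNumber U < 1) :
    (DeltaSet G₀).Nonempty ∧ sInf (DeltaSet G₀) ≤ AddMonoid.exponent G - 2 := by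
  set n := AddMonoid.exponent G
  have hn : 0 < n := AddMonoid.exponent_pos.mpr AddMonoid.ExponentExists.of_finite
  have hdvd : ∀ g ∈ U, addOrderOf g ∣ n := fun g _ => AddMonoid.addOrder_dvd_exponent g
  set t := (U.map fun g => n / addOrderOf g).sum
  have ht : 2 ≤ t :=
    (hU.two_le_card_of_crossNumber_lt_one hkU).trans (card_le_sum_map_div_addOrderOf hn hdvd)
  have htn : t < n := by
    have : (t : ℚ) < n := by
      rw [cast_sum_map_div_addOrderOf hdvd]
      exact mul_lt_of_lt_one_right (by exact_mod_cast hn) hkU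
    exact_mod_cast this
  have hnU : n • U ≠ 0 := by simpa [hn.ne'] using hU.2.1
  obtain ⟨d, hd, hdle⟩ := exists_mem_deltaSet_le_sub (hU.1.nsmul n) hnU
    (sum_map_div_addOrderOf_mem_lengthSet hn hU.1.1 hdvd) (nsmul_mem_lengthSet hU n) htn
  exact ⟨⟨d, hd⟩, (Nat.sInf_le hd).trans (by omega)⟩

/-- If `|G| > 2` and there is an atom `U` over `G₀` with `k(U) < 1`, then
`G₀` is non-half-factorial and `min Δ(G₀) ≤ exp(G) − 2`. -/
theorem stmt_4 {G : Type*} [AddCommGroup G] [Fintype G] (hG : 2 < Fintype.card G)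
    (G₀ : Set G) (U : Multiset G) (hU : IsAtomSeq G₀ U) (hkU : crossNumber U < 1) :
    (DeltaSet G₀).Nonempty ∧ sInf (DeltaSet G₀) ≤ AddMonoid.exponent G - 2 :=
  stmt_4_general G₀ U hU hkU
end

section
/- Let G be a finite abelian group with |G| > 2 and G₀ ⊆ G a non-half-factorial subset such that k(U) ≥ 1 for every atom U over G₀. Then min Δ(G₀) ≤ |G₀| − 2. -/
open Multiset

section Aux

variable {G : Type*} [AddCommGroup G]

lemma crossNumber_zero' : crossNumber (0 : Multiset G) = 0 := by simp [crossNumber]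

lemma crossNumber_add' (A B : Multiset G) :
    crossNumber (A + B) = crossNumber A + crossNumber B := by
  simp [crossNumber]

/-- `crossNumber` as an additive monoid hom. -/
noncomputable def crossHom (G : Type*) [AddCommGroup G] : Multiset G →+ ℚ :=
  ⟨⟨crossNumber, crossNumber_zero'⟩, crossNumber_add'⟩

lemma crossHom_apply (S : Multiset G) : crossHom G S = crossNumber S := rfl

lemma crossNumber_sum' (l : Multiset (Multiset G)) :
    crossNumber l.sum = (l.map crossNumber).sum := by
  induction l using Multiset.induction with
  | empty => simp [crossNumber]
  | cons a s ih => simp [crossNumber_add', ih]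

lemma crossNumber_replicate' [Fintype G] (g : G) :
    crossNumber (Multiset.replicate (addOrderOf g) g) = 1 := by
  have h : (addOrderOf g : ℚ) ≠ 0 := by
    exact_mod_cast (addOrderOf_pos g).ne'
  simp [crossNumber, Multiset.map_replicate, Multiset.sum_replicate, nsmul_eq_mul,
    mul_inv_cancel₀ h]

lemma isAtom_replicate' [Fintype G] {G₀ : Set G} {g : G} (hg : g ∈ G₀) :
    IsAtomSeq G₀ (Multiset.replicate (addOrderOf g) g) := by
  have ho : 0 < addOrderOf g := addOrderOf_pos g
  refine ⟨⟨fun x hx => ?_, ?_⟩, ?_, ?_⟩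
  · rw [Multiset.eq_of_mem_replicate hx]; exact hg
  · simp [Multiset.sum_replicate, addOrderOf_nsmul_eq_zero]
  · intro h
    have := congrArg Multiset.card h
    simp only [Multiset.card_replicate, Multiset.card_zero] at this
    omega
  · intro A B hA hB hA0 hB0 hEq
    have hAle : A ≤ Multiset.replicate (addOrderOf g) g := hEq ▸ Multiset.le_add_right A B
    have hArep : A = Multiset.replicate (Multiset.card A) g :=
      Multiset.eq_replicate_card.mpr (fun b hb => Multiset.eq_of_mem_replicate (Multiset.mem_of_le hAle hb))
    have hAsum : (Multiset.card A) • g = 0 := by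
      have h2 := hA.2; rw [hArep] at h2; simpa [Multiset.sum_replicate] using h2
    have hdvd : addOrderOf g ∣ Multiset.card A := (addOrderOf_dvd_iff_nsmul_eq_zero).mpr hAsum
    have hApos : 0 < Multiset.card A := Multiset.card_pos.mpr hA0
    have hBpos : 0 < Multiset.card B := Multiset.card_pos.mpr hB0
    have hcards : Multiset.card A + Multiset.card B = addOrderOf g := by
      have := congrArg Multiset.card hEq
      simpa [Multiset.card_replicate] using this.symm
    have : addOrderOf g ≤ Multiset.card A := Nat.le_of_dvd hApos hdvd
    omega

lemma exists_factorization' {G₀ : Set G} (R : Multiset G) :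
    IsZeroSumSeq G₀ R → R ≠ 0 →
      ∃ l : Multiset (Multiset G), (∀ A ∈ l, IsAtomSeq G₀ A) ∧ l.sum = R ∧ l ≠ 0 := by
  induction R using Multiset.strongInductionOn with
  | ih R ih =>
    intro hR hR0
    by_cases hat : IsAtomSeq G₀ R
    · exact ⟨{R}, by simpa using hat, by simp, by simp⟩
    · have h3 : ¬ ∀ A B : Multiset G, IsZeroSumSeq G₀ A → IsZeroSumSeq G₀ B →
          A ≠ 0 → B ≠ 0 → R ≠ A + B := fun h => hat ⟨hR, hR0, h⟩
      push_neg at h3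
      obtain ⟨A, B, hA, hB, hA0, hB0, hEq⟩ := h3
      have hcA : 0 < Multiset.card A := Multiset.card_pos.mpr hA0
      have hcB : 0 < Multiset.card B := Multiset.card_pos.mpr hB0
      have hAlt : A < R := by
        rw [hEq]
        refine lt_of_le_of_ne (Multiset.le_add_right A B) (fun h => ?_)
        have := congrArg Multiset.card h
        simp only [Multiset.card_add] at this; omega
      have hBlt : B < R := by
        rw [hEq]
        refine lt_of_le_of_ne (Multiset.le_add_left B A) (fun h => ?_)
        have := congrArg Multiset.card h
        simp only [Multiset.card_add] at this; omega
      obtain ⟨lA, hlA, hlAsum, hlA0⟩ := ih A hAlt hA hA0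
      obtain ⟨lB, hlB, hlBsum, hlB0⟩ := ih B hBlt hB hB0
      refine ⟨lA + lB, fun C hC => ?_, by rw [Multiset.sum_add, hlAsum, hlBsum, hEq], fun h => ?_⟩
      · rcases Multiset.mem_add.mp hC with h | h
        · exact hlA C h
        · exact hlB C h
      · have := congrArg Multiset.card h
        have hc : 0 < Multiset.card lA := Multiset.card_pos.mpr hlA0
        simp only [Multiset.card_add, Multiset.card_zero] at this; omega

lemma card_le_crossSum' {G₀ : Set G} (hLCN : IsLCNSet G₀) (l : Multiset (Multiset G))
    (hl : ∀ A ∈ l, IsAtomSeq G₀ A) :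
    (Multiset.card l : ℚ) ≤ (l.map crossNumber).sum := by
  induction l using Multiset.induction with
  | empty => simp
  | cons a s ih =>
    simp only [Multiset.map_cons, Multiset.sum_cons, Multiset.card_cons]
    push_cast
    have h1 : 1 ≤ crossNumber a := hLCN a (hl a (Multiset.mem_cons_self a s))
    have h2 := ih (fun A hA => hl A (Multiset.mem_cons_of_mem hA))
    linarith

lemma exists_atom_big' [Fintype G] {G₀ : Set G} (hne : (DeltaSet G₀).Nonempty)
    (hLCN : IsLCNSet G₀) : ∃ U : Multiset G, IsAtomSeq G₀ U ∧ 1 < crossNumber U := by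
  by_contra h
  push_neg at h
  have hall : ∀ U : Multiset G, IsAtomSeq G₀ U → crossNumber U = 1 :=
    fun U hU => le_antisymm (h U hU) (hLCN U hU)
  have key : ∀ B : Multiset G, ∀ k ∈ LengthSet G₀ B, (k : ℚ) = crossNumber B := by
    rintro B k ⟨l, hcard, hl, hsum⟩
    rw [← hsum, crossNumber_sum']
    have heq : l.map crossNumber = l.map (fun _ => (1 : ℚ)) :=
      Multiset.map_congr rfl (fun A hA => hall A (hl A hA))
    rw [heq, Multiset.map_const', Multiset.sum_replicate, hcard]
    simp
  obtain ⟨d, B, hB, hB0, x, hx, y, hy, hxy, _⟩ := hne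
  have h1 := key B x hx
  have h2 := key B y hy
  have : (x : ℚ) = (y : ℚ) := h1.trans h2.symm
  exact absurd (Nat.cast_injective this) hxy.ne

end Aux

/-- If `|G| > 2` and `G₀` is non-half-factorial with `k(U) ≥ 1` for every
atom `U` over `G₀`, then `min Δ(G₀) ≤ |G₀| − 2`. -/
theorem stmt_5 {G : Type*} [AddCommGroup G] [Fintype G] (hG : 2 < Fintype.card G)
    (G₀ : Set G) (hne : (DeltaSet G₀).Nonempty) (hLCN : IsLCNSet G₀) :
    sInf (DeltaSet G₀) ≤ G₀.ncard - 2 := by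
  classical
  obtain ⟨U, hU, hkU⟩ := exists_atom_big' hne hLCN
  have hU0 : U ≠ 0 := hU.2.1
  have hUzs : IsZeroSumSeq G₀ U := hU.1
  -- every multiplicity in U is strictly below the order
  have hcount : ∀ g ∈ U, U.count g < addOrderOf g := by
    intro g hg
    by_contra hle
    push_neg at hle
    have hAle : Multiset.replicate (addOrderOf g) g ≤ U := by
      rw [Multiset.le_iff_count]
      intro a
      rw [Multiset.count_replicate]
      split
      · next h => subst h; exact hle
      · exact Nat.zero_le _
    have hAzs : IsZeroSumSeq G₀ (Multiset.replicate (addOrderOf g) g) :=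
      (isAtom_replicate' (hUzs.1 g hg)).1
    by_cases hEqU : U = Multiset.replicate (addOrderOf g) g
    · rw [hEqU, crossNumber_replicate'] at hkU; exact lt_irrefl _ hkU
    · have hsplit : Multiset.replicate (addOrderOf g) g +
          (U - Multiset.replicate (addOrderOf g) g) = U := add_tsub_cancel_of_le hAle
      have hB0 : U - Multiset.replicate (addOrderOf g) g ≠ 0 := by
        intro h
        exact hEqU (le_antisymm (tsub_eq_zero_iff_le.mp h) hAle)
      have hBzs : IsZeroSumSeq G₀ (U - Multiset.replicate (addOrderOf g) g) := by
        constructor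
        · intro x hx
          exact hUzs.1 x (Multiset.mem_of_le tsub_le_self hx)
        · have := congrArg Multiset.sum hsplit
          rw [Multiset.sum_add, hAzs.2, hUzs.2, zero_add] at this
          exact this
      have hA0 : Multiset.replicate (addOrderOf g) g ≠ 0 := (isAtom_replicate' (hUzs.1 g hg)).2.1
      exact hU.2.2 _ _ hAzs hBzs hA0 hB0 hsplit.symm
  -- the auxiliary zero-sum sequence T
  set s : ℕ := U.toFinset.card with hs
  set T : Multiset G := ∑ g ∈ U.toFinset, Multiset.replicate (addOrderOf g) g with hT
  have hcountT : ∀ a : G, T.count a = if a ∈ U.toFinset then addOrderOf a else 0 := by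
    intro a
    rw [hT, Multiset.count_sum']
    simp [Multiset.count_replicate]
  have hUT : U ≤ T := by
    rw [Multiset.le_iff_count]
    intro a
    rw [hcountT]
    by_cases ha : a ∈ U.toFinset
    · rw [if_pos ha]; exact le_of_lt (hcount a (Multiset.mem_toFinset.mp ha))
    · rw [if_neg ha]
      exact le_of_eq (Multiset.count_eq_zero.mpr (fun h => ha (Multiset.mem_toFinset.mpr h)))
  have hT0 : T ≠ 0 := by
    intro h
    rw [h] at hUT
    exact hU0 (Multiset.le_zero.mp hUT)
  have hTzs : IsZeroSumSeq G₀ T := by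
    constructor
    · intro x hx
      have : T.count x ≠ 0 := Multiset.count_ne_zero.mpr hx
      rw [hcountT] at this
      by_cases hmem : x ∈ U.toFinset
      · exact hUzs.1 x (Multiset.mem_toFinset.mp hmem)
      · rw [if_neg hmem] at this; exact absurd rfl this
    · have h1 : T.sum = ∑ g ∈ U.toFinset, (Multiset.replicate (addOrderOf g) g).sum := by
        rw [hT, ← Multiset.coe_sumAddMonoidHom,
          map_sum Multiset.sumAddMonoidHom _ U.toFinset]
      rw [h1]
      apply Finset.sum_eq_zero
      intro g _
      simp [Multiset.sum_replicate, addOrderOf_nsmul_eq_zero]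
  -- first factorization: into s replicate-atoms
  have hsmem : s ∈ LengthSet G₀ T := by
    refine ⟨U.toFinset.val.map (fun g => Multiset.replicate (addOrderOf g) g), ?_, ?_, ?_⟩
    · rw [Multiset.card_map]; rfl
    · intro A hA
      obtain ⟨g, hg, rfl⟩ := Multiset.mem_map.mp hA
      exact isAtom_replicate' (hUzs.1 g (Multiset.mem_toFinset.mp hg))
    · rw [hT, Finset.sum_eq_multiset_sum]
  -- second factorization: U together with a factorization of T - U
  have hsplitT : U + (T - U) = T := add_tsub_cancel_of_le hUT
  have hRzs : IsZeroSumSeq G₀ (T - U) := by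
    constructor
    · intro x hx
      exact hTzs.1 x (Multiset.mem_of_le tsub_le_self hx)
    · have := congrArg Multiset.sum hsplitT
      rw [Multiset.sum_add, hUzs.2, hTzs.2, zero_add] at this
      exact this
  have hR0 : T - U ≠ 0 := by
    obtain ⟨g, hg⟩ := Multiset.exists_mem_of_ne_zero hU0
    intro h
    have hcnt : (T - U).count g = 0 := by rw [h]; simp
    rw [Multiset.count_sub, hcountT, if_pos (Multiset.mem_toFinset.mpr hg)] at hcnt
    have := hcount g hg
    omega
  obtain ⟨lR, hlR, hlRsum, hlR0⟩ := exists_factorization' (T - U) hRzs hR0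
  set r : ℕ := Multiset.card lR with hr
  have hr1 : 1 ≤ r := Multiset.card_pos.mpr hlR0
  have hymem : r + 1 ∈ LengthSet G₀ T := by
    refine ⟨U ::ₘ lR, by simp [hr], ?_, ?_⟩
    · intro A hA
      rcases Multiset.mem_cons.mp hA with h | h
      · rw [h]; exact hU
      · exact hlR A h
    · rw [Multiset.sum_cons, hlRsum, hsplitT]
  -- cross number computations
  have hkT : crossNumber T = (s : ℚ) := by
    have h1 : crossHom G T = ∑ g ∈ U.toFinset,
        crossHom G (Multiset.replicate (addOrderOf g) g) := by
      rw [hT, map_sum]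
    rw [crossHom_apply] at h1
    rw [h1]
    have h2 : ∀ g ∈ U.toFinset,
        crossHom G (Multiset.replicate (addOrderOf g) g) = 1 := by
      intro g _
      rw [crossHom_apply, crossNumber_replicate']
    rw [Finset.sum_congr rfl h2]
    simp [hs]
  have hkR : crossNumber (T - U) = (s : ℚ) - crossNumber U := by
    have := congrArg crossNumber hsplitT
    rw [crossNumber_add', hkT] at this
    linarith
  have hrle : (r : ℚ) ≤ crossNumber (T - U) := by
    rw [← hlRsum, crossNumber_sum']
    exact card_le_crossSum' hLCN lR hlR
  have hylt : r + 1 < s := by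
    have h1 : (r : ℚ) < (s : ℚ) - 1 := by
      rw [hkR] at hrle
      linarith
    have : ((r : ℚ) + 1) < (s : ℚ) := by linarith
    exact_mod_cast this
  -- extract an element of DeltaSet G₀
  set L : Set ℕ := LengthSet G₀ T with hL
  set S' : Set ℕ := {n | n ∈ L ∧ r + 1 < n} with hS'
  have hS'ne : s ∈ S' := ⟨hsmem, hylt⟩
  have hy' : sInf S' ∈ S' := Nat.sInf_mem ⟨s, hS'ne⟩
  have hy'le : sInf S' ≤ s := Nat.sInf_le hS'ne
  have hdmem : (sInf S' - (r + 1)) ∈ DeltaSet G₀ := by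
    refine ⟨T, hTzs, hT0, r + 1, hymem, sInf S', hy'.1, hy'.2, rfl, ?_⟩
    intro z hz hcon
    exact absurd (Nat.sInf_le (⟨hz, hcon.1⟩ : z ∈ S')) (not_le.mpr hcon.2)
  have hsle : s ≤ G₀.ncard := by
    have h2 : (↑U.toFinset : Set G) ⊆ G₀ := by
      intro x hx
      exact hUzs.1 x (Multiset.mem_toFinset.mp hx)
    have h3 := Set.ncard_le_ncard h2 (Set.toFinite G₀)
    rwa [Set.ncard_coe_finset] at h3
  have hfinal := Nat.sInf_le hdmem
  omega
end

section
/- Let G be a finite abelian group, G₀ ⊆ G a subset, and g ∈ G₀. Set m = min { k ∈ ℕ, k ≥ 1 : k·g ∈ ⟨G₀ \ {g}⟩ }. Then m equals each of the following: gcd { v_g(B) : B ∈ B(G₀) }; gcd { v_g(A) : A an atom over G₀ }; min { v_g(A) : A an atom over G₀ with v_g(A) > 0 }; min { v_g(B) : B ∈ B(G₀) with v_g(B) > 0 }; and gcd { k ∈ ℕ, k ≥ 1 : k·g ∈ ⟨G₀ \ {g}⟩ }. In particular, m divides ord(g). -/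
/-!
Let `H = ⟨G₀ \ {g}⟩`. A sequence over `G₀` containing `g` exactly `k` times sums to `k • g`
modulo `H`, and in a finite group every element of `H` is a sum of elements of `G₀ \ {g}`.
Hence the multiplicities of `g` in zero-sum sequences are exactly the multiples of the order
of `g` in `G ⧸ H`, which is `m`. Splitting a zero-sum sequence of multiplicity `m` into
atoms yields an atom of multiplicity exactly `m`.
-/

open Multiset

lemma isSetGcd_of_mem_of_dvd {S : Set ℕ} {m : ℕ} (hm : m ∈ S) (hdvd : ∀ s ∈ S, m ∣ s) :
    IsSetGcd S m :=
  ⟨hdvd, fun _ he => he m hm⟩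

lemma sInf_pos_eq_of_dvd {P : ℕ → Prop} {m : ℕ} (hm : 0 < m) (hPm : P m)
    (hdvd : ∀ v, 0 < v → P v → m ∣ v) : sInf {v | 0 < v ∧ P v} = m :=
  le_antisymm (Nat.sInf_le ⟨hm, hPm⟩)
    (le_csInf ⟨m, hm, hPm⟩ fun v ⟨hv, hPv⟩ => Nat.le_of_dvd hv (hdvd v hv hPv))

section ZeroSum

variable {G : Type*} [AddCommGroup G]

lemma nsmul_mem_iff_addOrderOf_dvd (H : AddSubgroup G) (g : G) (k : ℕ) :
    k • g ∈ H ↔ addOrderOf (g : G ⧸ H) ∣ k := by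
  rw [addOrderOf_dvd_iff_nsmul_eq_zero, ← QuotientAddGroup.mk_nsmul,
    QuotientAddGroup.eq_zero_iff]

variable [DecidableEq G] {G₀ : Set G} {g : G}

lemma sum_sub_count_nsmul_mem_closure {B : Multiset G} (hB : ∀ x ∈ B, x ∈ G₀) :
    B.sum - B.count g • g ∈ AddSubgroup.closure (G₀ \ {g}) := by
  have hsplit := congrArg Multiset.sum (filter_add_not (· = g) B)
  rw [filter_eq', sum_add, sum_replicate] at hsplit
  rw [← hsplit, add_sub_cancel_left]
  exact AddSubgroup.multiset_sum_mem _ _ fun x hx =>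
    AddSubgroup.subset_closure <|
      Set.mem_sdiff_singleton.2 ⟨hB x (mem_of_mem_filter hx), (mem_filter.1 hx).2⟩

theorem exists_isZeroSumSeq_count_eq_iff [Finite G] (hg : g ∈ G₀) (k : ℕ) :
    (∃ B, IsZeroSumSeq G₀ B ∧ B.count g = k) ↔ k • g ∈ AddSubgroup.closure (G₀ \ {g}) := by
  constructor
  · rintro ⟨B, ⟨hB, hsum⟩, rfl⟩
    simpa [hsum] using sum_sub_count_nsmul_mem_closure (g := g) hB
  · intro hk
    have hneg : -(k • g) ∈ AddSubmonoid.closure (G₀ \ {g}) := by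
      rw [← AddSubgroup.closure_toAddSubmonoid_of_finite, AddSubgroup.mem_toAddSubmonoid]
      exact neg_mem hk
    obtain ⟨T, hT, hTsum⟩ := AddSubmonoid.exists_multiset_of_mem_closure hneg
    have hgT : T.count g = 0 := count_eq_zero.2 fun h => (hT g h).2 rfl
    refine ⟨replicate k g + T, ⟨?_, ?_⟩, ?_⟩
    · rintro x hx
      rcases mem_add.1 hx with hx | hx
      · rwa [eq_of_mem_replicate hx]
      · exact (hT x hx).1
    · rw [sum_add, sum_replicate, hTsum, add_neg_cancel]
    · rw [count_add, count_replicate_self, hgT, add_zero]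

lemma exists_isAtomSeq_count_pos_le {B : Multiset G} (hB : IsZeroSumSeq G₀ B)
    (hpos : 0 < B.count g) :
    ∃ A, IsAtomSeq G₀ A ∧ 0 < A.count g ∧ A.count g ≤ B.count g := by
  induction B using Multiset.strongInductionOn with
  | ih B ih =>
    by_cases hatom : IsAtomSeq G₀ B
    · exact ⟨B, hatom, hpos, le_rfl⟩
    have hB0 : B ≠ 0 := by rintro rfl; simp at hpos
    obtain ⟨B₁, B₂, h₁, h₂, hne₁, hne₂, rfl⟩ : ∃ B₁ B₂, IsZeroSumSeq G₀ B₁ ∧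
        IsZeroSumSeq G₀ B₂ ∧ B₁ ≠ 0 ∧ B₂ ≠ 0 ∧ B = B₁ + B₂ := by
      simpa [IsAtomSeq, hB, hB0] using hatom
    rw [count_add] at hpos ⊢
    rcases Nat.eq_zero_or_pos (B₁.count g) with hc₁ | hc₁
    · obtain ⟨A, hA, hApos, hle⟩ :=
        ih B₂ (lt_add_of_pos_left _ (pos_iff_ne_zero.2 hne₁)) h₂ (by omega)
      exact ⟨A, hA, hApos, by omega⟩
    · obtain ⟨A, hA, hApos, hle⟩ :=
        ih B₁ (lt_add_of_pos_right _ (pos_iff_ne_zero.2 hne₂)) h₁ hc₁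
      exact ⟨A, hA, hApos, by omega⟩

end ZeroSum

/-- For `g ∈ G₀` and `m = min {k ≥ 1 : k·g ∈ ⟨G₀ \ {g}⟩}`, `m` equals the
gcd of the `g`-multiplicities of zero-sum sequences resp. atoms over `G₀`, the minimal
positive `g`-multiplicity of an atom resp. zero-sum sequence over `G₀`, and the gcd of
`{k ≥ 1 : k·g ∈ ⟨G₀ \ {g}⟩}`; in particular `m ∣ ord(g)`. -/
theorem stmt_6 {G : Type*} [AddCommGroup G] [Fintype G] [DecidableEq G]
    (G₀ : Set G) (g : G) (hg : g ∈ G₀)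
    (m : ℕ) (hm : m = sInf {k : ℕ | 0 < k ∧ k • g ∈ AddSubgroup.closure (G₀ \ {g})}) :
    IsSetGcd {v : ℕ | ∃ B : Multiset G, IsZeroSumSeq G₀ B ∧ B.count g = v} m ∧
    IsSetGcd {v : ℕ | ∃ A : Multiset G, IsAtomSeq G₀ A ∧ A.count g = v} m ∧
    m = sInf {v : ℕ | 0 < v ∧ ∃ A : Multiset G, IsAtomSeq G₀ A ∧ A.count g = v} ∧
    m = sInf {v : ℕ | 0 < v ∧ ∃ B : Multiset G, IsZeroSumSeq G₀ B ∧ B.count g = v} ∧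
    IsSetGcd {k : ℕ | 0 < k ∧ k • g ∈ AddSubgroup.closure (G₀ \ {g})} m ∧
    m ∣ addOrderOf g := by
  set H := AddSubgroup.closure (G₀ \ {g})
  have horder : m = addOrderOf (g : G ⧸ H) := by
    have hmem := nsmul_mem_iff_addOrderOf_dvd H g
    exact hm.trans (sInf_pos_eq_of_dvd (addOrderOf_pos _) ((hmem _).2 dvd_rfl)
      fun k _ hk => (hmem k).1 hk)
  have hpos : 0 < m := horder ▸ addOrderOf_pos _
  have hmem : ∀ k, k • g ∈ H ↔ m ∣ k := horder ▸ nsmul_mem_iff_addOrderOf_dvd H g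
  have hzs : ∀ k, (∃ B, IsZeroSumSeq G₀ B ∧ B.count g = k) ↔ m ∣ k := fun k =>
    (exists_isZeroSumSeq_count_eq_iff hg k).trans (hmem k)
  have hatom_dvd : ∀ A, IsAtomSeq G₀ A → m ∣ A.count g := fun A hA => (hzs _).1 ⟨A, hA.1, rfl⟩
  have hatom : ∃ A, IsAtomSeq G₀ A ∧ A.count g = m := by
    obtain ⟨B, hB, hBm⟩ := (hzs m).2 dvd_rfl
    obtain ⟨A, hA, hApos, hle⟩ := exists_isAtomSeq_count_pos_le hB (hBm ▸ hpos)
    exact ⟨A, hA, le_antisymm (hBm ▸ hle) (Nat.le_of_dvd hApos (hatom_dvd A hA))⟩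
  refine ⟨isSetGcd_of_mem_of_dvd ((hzs m).2 dvd_rfl) fun k hk => (hzs k).1 hk,
    isSetGcd_of_mem_of_dvd hatom ?_, (sInf_pos_eq_of_dvd hpos hatom ?_).symm,
    (sInf_pos_eq_of_dvd hpos ((hzs m).2 dvd_rfl) fun k _ hk => (hzs k).1 hk).symm,
    isSetGcd_of_mem_of_dvd ⟨hpos, (hmem m).2 dvd_rfl⟩ fun k hk => (hmem k).1 hk.2,
    horder ▸ addOrderOf_map_dvd (QuotientAddGroup.mk' H) g⟩
  · rintro _ ⟨A, hA, rfl⟩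
    exact hatom_dvd A hA
  · rintro _ _ ⟨A, hA, rfl⟩
    exact hatom_dvd A hA
end

section
/- Let G be a finite abelian group and G₀ ⊆ G a subset such that for every h ∈ G₀ and every h' ∈ G₀ \ {h}, one has h ∉ ⟨G₀ \ {h, h'}⟩. Then for every atom A over G₀ with supp(A) ⊊ G₀ and every h ∈ supp(A), gcd(v_h(A), ord(h)) > 1. -/
open Multiset

/-- If for every `h ∈ G₀` and `h' ∈ G₀ \ {h}` one has
`h ∉ ⟨G₀ \ {h, h'}⟩`, then every atom `A` over `G₀` with `supp(A) ⊊ G₀` satisfies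
`gcd(v_h(A), ord(h)) > 1` for each `h ∈ supp(A)`. -/
theorem stmt_7 {G : Type*} [AddCommGroup G] [Fintype G] [DecidableEq G] (G₀ : Set G)
    (hyp : ∀ h ∈ G₀, ∀ h' ∈ G₀ \ {h}, h ∉ AddSubgroup.closure (G₀ \ {h, h'})) :
    ∀ A : Multiset G, IsAtomSeq G₀ A → (↑A.toFinset : Set G) ⊂ G₀ →
      ∀ h ∈ A.toFinset, 1 < Nat.gcd (A.count h) (addOrderOf h) := by
  rintro A ⟨⟨hAmem, hAsum⟩, -, -⟩ hss h hh
  have hhA : h ∈ A := Multiset.mem_toFinset.mp hh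
  have hhG : h ∈ G₀ := hAmem h hhA
  obtain ⟨h', hh'G, hh'A⟩ : ∃ h', h' ∈ G₀ ∧ h' ∉ (↑A.toFinset : Set G) :=
    Set.exists_of_ssubset hss
  have hh'ne : h' ≠ h := fun e => hh'A (e ▸ hh)
  set H := AddSubgroup.closure (G₀ \ {h, h'}) with hH
  have hrest : (A.filter (fun x => ¬ x = h)).sum ∈ H := by
    refine AddSubgroup.multiset_sum_mem _ _ (fun x hx => ?_)
    have hx' := Multiset.mem_filter.mp hx
    refine AddSubgroup.subset_closure ⟨hAmem x hx'.1, ?_⟩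
    simp only [Set.mem_insert_iff, Set.mem_singleton_iff]
    push_neg
    exact ⟨hx'.2, fun e => hh'A (e ▸ Multiset.mem_toFinset.mpr hx'.1)⟩
  have hsplit : (A.count h) • h + (A.filter (fun x => ¬ x = h)).sum = 0 := by
    have := Multiset.filter_add_not (fun x => x = h) A
    calc (A.count h) • h + (A.filter (fun x => ¬ x = h)).sum
        = (A.filter (fun x => x = h)).sum + (A.filter (fun x => ¬ x = h)).sum := by
          rw [Multiset.filter_eq', Multiset.sum_replicate]
      _ = A.sum := by rw [← Multiset.sum_add, this]
      _ = 0 := hAsum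
  have hvh : ((A.count h : ℤ)) • h ∈ H := by
    rw [natCast_zsmul]
    have heq : (A.count h) • h = -((A.filter (fun x => ¬ x = h)).sum) :=
      eq_neg_of_add_eq_zero_left hsplit
    rw [heq]
    exact H.neg_mem hrest
  have hoh : ((addOrderOf h : ℤ)) • h ∈ H := by
    rw [natCast_zsmul, addOrderOf_nsmul_eq_zero]
    exact H.zero_mem
  have hgpos : 0 < Nat.gcd (A.count h) (addOrderOf h) :=
    Nat.gcd_pos_of_pos_right _ (addOrderOf_pos h)
  rcases Nat.lt_or_ge 1 (Nat.gcd (A.count h) (addOrderOf h)) with hgt | hle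
  · exact hgt
  · exfalso
    have hg1 : Nat.gcd (A.count h) (addOrderOf h) = 1 := le_antisymm hle hgpos
    have hb := Nat.gcd_eq_gcd_ab (A.count h) (addOrderOf h)
    rw [hg1] at hb
    have hmem : h ∈ H := by
      have heq : h = (Nat.gcdA (A.count h) (addOrderOf h)) • (((A.count h : ℤ)) • h)
          + (Nat.gcdB (A.count h) (addOrderOf h)) • (((addOrderOf h : ℤ)) • h) := by
        rw [← mul_zsmul, ← mul_zsmul, ← add_zsmul]
        have h1 : (Nat.gcdA (A.count h) (addOrderOf h) * (A.count h : ℤ)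
            + Nat.gcdB (A.count h) (addOrderOf h) * (addOrderOf h : ℤ)) = 1 := by
          push_cast at hb ⊢; linarith
        rw [h1, one_zsmul]
      rw [heq]
      exact H.add_mem (H.zsmul_mem hvh _) (H.zsmul_mem hoh _)
    exact hyp h hhG h' ⟨hh'G, hh'ne⟩ hmem
end
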